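/- (Theorem: O(n)-equivariance of the equivariant hypersphere.) For every R ∈ O(n), the filter-bank matrix B of the equivariant hypersphere satisfies the intertwining identity V · B = B · D₂(R), where V = M_nᵀ · D(R_O · R · R_Oᵀ) · M_n. Consequently, for every input X ∈ ℝ^{n+2}, V · (B · X) = B · (D₂(R) · X). -/

import Mathlib

/-- κ = −(1+√(n+1))/n^{3/2} -/
noncomputable def simplexKappa (n : ℕ) : ℝ :=
  -(1 + Real.sqrt (n + 1)) / (n : ℝ) ^ ((3 : ℝ) / 2)

/-- μ = √(1 + 1/n) -/
noncomputable def simplexMu (n : ℕ) : ℝ := Real.sqrt (1 + 1 / n)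

/-- The vertices p_1, …, p_{n+1} ∈ ℝ^n of the regular n-simplex (0-indexed by `Fin (n+1)`):
`p_1 = n^{-1/2}·𝟙` and `p_i = κ·𝟙 + μ·e_{i-1}` for `2 ≤ i ≤ n+1`. -/
noncomputable def simplexVertex (n : ℕ) (i : Fin (n + 1)) : EuclideanSpace ℝ (Fin n) :=
  WithLp.toLp 2 fun j =>
    if (i : ℕ) = 0 then (n : ℝ) ^ (-(1 : ℝ) / 2)
    else simplexKappa n + (if (j : ℕ) = (i : ℕ) - 1 then simplexMu n else 0)

open Matrix

/-- The (n+1)×(n+1) change-of-basis matrix M_n whose i-th column is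
m_i = (1/p)·(p_i, n^{-1/2}) with p = √(1 + 1/n). -/
noncomputable def simplexM (n : ℕ) : Matrix (Fin (n + 1)) (Fin (n + 1)) ℝ :=
  Matrix.of fun j i =>
    (Real.sqrt (1 + 1 / n))⁻¹ *
      (if h : (j : ℕ) < n then simplexVertex n i ⟨j, h⟩ else (n : ℝ) ^ (-(1 : ℝ) / 2))
/-- D(A): the (n+1)×(n+1) block-diagonal matrix diag(A, 1), appending a 1 to the
diagonal of the n×n matrix A. -/
def blockDiag1 (n : ℕ) (A : Matrix (Fin n) (Fin n) ℝ) :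
    Matrix (Fin (n + 1)) (Fin (n + 1)) ℝ :=
  Matrix.of fun i j =>
    if hi : (i : ℕ) < n then (if hj : (j : ℕ) < n then A ⟨i, hi⟩ ⟨j, hj⟩ else 0)
    else (if (i : ℕ) = (j : ℕ) then 1 else 0)
/-- D₂(A): the (n+2)×(n+2) block-diagonal matrix diag(A, 1, 1), appending two 1s to
the diagonal of the n×n matrix A. -/
def blockDiag2 (n : ℕ) (A : Matrix (Fin n) (Fin n) ℝ) :
    Matrix (Fin (n + 2)) (Fin (n + 2)) ℝ :=
  Matrix.of fun i j =>
    if hi : (i : ℕ) < n then (if hj : (j : ℕ) < n then A ⟨i, hi⟩ ⟨j, hj⟩ else 0)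
    else (if (i : ℕ) = (j : ℕ) then 1 else 0)

/-- The filter-bank matrix B of the equivariant hypersphere: the (n+1)×(n+2) matrix
whose i-th row is ((R_Oᵀ · T_i · R_O)·c₀, s₁, s₂) ∈ ℝ^{n+2}. -/
noncomputable def filterBank (n : ℕ) (c₀ : EuclideanSpace ℝ (Fin n)) (s₁ s₂ : ℝ)
    (RO : Matrix (Fin n) (Fin n) ℝ) (T : Fin (n + 1) → Matrix (Fin n) (Fin n) ℝ) :
    Matrix (Fin (n + 1)) (Fin (n + 2)) ℝ :=
  Matrix.of fun i j =>
    if h : (j : ℕ) < n then ((ROᵀ * T i * RO).mulVec c₀) ⟨j, h⟩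
    else if (j : ℕ) = n then s₁ else s₂

/-!
Let `P` be the `(n+1) × n` matrix whose rows are the simplex vertices. They are centred and
form a tight frame, `∑ pᵢ = 0` and `∑ pᵢ pᵢᵀ = μ² I`, so `M_n` maps the columns of `P` to `μ`
times the first `n` standard basis vectors and the all-ones vector to a multiple of the last
one. Hence `V = M_nᵀ D(Q) M_n` satisfies `V P = P Q` and fixes constant vectors. By the
hypothesis on the `T_i`, the first `n` columns of `B` form `‖c₀‖ P R_O` and the last two are
constant, so with `Q = R_O R R_Oᵀ` and `R_Oᵀ R_O = 1` we get `V B = B D₂(R)`.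
-/

lemma rpow_neg_one_half_eq_inv_sqrt (x : ℝ) (hx : 0 ≤ x) : x ^ (-(1 : ℝ) / 2) = (√x)⁻¹ := by
  rw [neg_div, Real.rpow_neg hx, Real.sqrt_eq_rpow]

lemma simplexKappa_eq (n : ℕ) : simplexKappa n = -(1 + √(n + 1)) / (n * √n) := by
  rw [simplexKappa, show (3 : ℝ) / 2 = 1 + 1 / 2 by norm_num,
    Real.rpow_add' (Nat.cast_nonneg n) (by norm_num), Real.rpow_one, ← Real.sqrt_eq_rpow]

lemma simplexMu_eq {n : ℕ} (hn : 1 ≤ n) : simplexMu n = √(n + 1) / √n := by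
  have : (0 : ℝ) < n := by exact_mod_cast hn
  rw [simplexMu, ← Real.sqrt_div' _ this.le, add_div, div_self this.ne']

lemma inv_sqrt_add_mul_simplexKappa_add_simplexMu_eq_zero {n : ℕ} (hn : 1 ≤ n) :
    (√n)⁻¹ + n * simplexKappa n + simplexMu n = 0 := by
  have : (0 : ℝ) < √n := Real.sqrt_pos.2 (by exact_mod_cast hn)
  rw [simplexKappa_eq, simplexMu_eq hn]
  field_simp
  ring

lemma inv_sqrt_sq_add_mul_simplexKappa_sq_add_eq_zero {n : ℕ} (hn : 1 ≤ n) :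
    (√n)⁻¹ ^ 2 + n * simplexKappa n ^ 2 + 2 * simplexKappa n * simplexMu n = 0 := by
  have hs : (0 : ℝ) < √n := Real.sqrt_pos.2 (by exact_mod_cast hn)
  have hs2 : √n * √n = n := Real.mul_self_sqrt (Nat.cast_nonneg n)
  have ht2 : √(n + 1 : ℝ) * √(n + 1) = n + 1 := Real.mul_self_sqrt (by positivity)
  rw [simplexKappa_eq, simplexMu_eq hn]
  field_simp
  linear_combination -ht2

lemma inv_simplexMu_mul_inv_sqrt {n : ℕ} (hn : 1 ≤ n) :
    (simplexMu n)⁻¹ * (√n)⁻¹ = (√(n + 1))⁻¹ := by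
  have hs : (0 : ℝ) < √n := Real.sqrt_pos.2 (by exact_mod_cast hn)
  rw [simplexMu_eq hn, ← mul_inv, div_mul_cancel₀ _ hs.ne']

lemma simplexVertex_zero_apply (n : ℕ) (j : Fin n) : simplexVertex n 0 j = (√n)⁻¹ := by
  simp [simplexVertex, rpow_neg_one_half_eq_inv_sqrt]

lemma simplexVertex_succ_apply (n : ℕ) (k j : Fin n) :
    simplexVertex n k.succ j = simplexKappa n + if j = k then simplexMu n else 0 := by
  simp [simplexVertex, Fin.val_eq_val]

lemma sum_simplexVertex_apply {n : ℕ} (hn : 1 ≤ n) (j : Fin n) :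
    ∑ i, simplexVertex n i j = 0 := by
  rw [Fin.sum_univ_succ]
  simp only [simplexVertex_zero_apply, simplexVertex_succ_apply, Finset.sum_add_distrib,
    Finset.sum_ite_eq, Finset.mem_univ, if_true, Finset.sum_const, Finset.card_univ,
    Fintype.card_fin, nsmul_eq_mul]
  linarith [inv_sqrt_add_mul_simplexKappa_add_simplexMu_eq_zero hn]

lemma sum_simplexVertex_mul_simplexVertex {n : ℕ} (hn : 1 ≤ n) (j k : Fin n) :
    ∑ i, simplexVertex n i j * simplexVertex n i k =
      if j = k then simplexMu n * simplexMu n else 0 := by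
  simp only [Fin.sum_univ_succ, simplexVertex_zero_apply, simplexVertex_succ_apply, add_mul,
    mul_add, Finset.sum_add_distrib, ite_mul, mul_ite, mul_zero, zero_mul, Finset.sum_ite_eq,
    Finset.mem_univ, if_true, Finset.sum_const, Finset.card_univ, Fintype.card_fin, nsmul_eq_mul]
  split_ifs <;> linarith [inv_sqrt_sq_add_mul_simplexKappa_sq_add_eq_zero hn]

lemma simplexMu_pos (n : ℕ) : 0 < simplexMu n := Real.sqrt_pos.2 (by positivity)

noncomputable def simplexVertexMatrix (n : ℕ) : Matrix (Fin (n + 1)) (Fin n) ℝ :=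
  Matrix.of fun i j => simplexVertex n i j

def castSuccMatrix (n : ℕ) : Matrix (Fin (n + 1)) (Fin n) ℝ :=
  Matrix.of fun l t => if l = t.castSucc then 1 else 0

lemma simplexM_castSucc_apply (n : ℕ) (t : Fin n) (i : Fin (n + 1)) :
    simplexM n t.castSucc i = (simplexMu n)⁻¹ * simplexVertex n i t := by
  simp [simplexM, simplexMu]

lemma simplexM_last_apply {n : ℕ} (hn : 1 ≤ n) (i : Fin (n + 1)) :
    simplexM n (Fin.last n) i = (√(n + 1))⁻¹ := by
  simp [simplexM, rpow_neg_one_half_eq_inv_sqrt, ← inv_simplexMu_mul_inv_sqrt hn, simplexMu]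

lemma simplexM_mul_simplexVertexMatrix {n : ℕ} (hn : 1 ≤ n) :
    simplexM n * simplexVertexMatrix n = simplexMu n • castSuccMatrix n := by
  ext l t
  induction l using Fin.lastCases with
  | last =>
    simp [Matrix.mul_apply, simplexM_last_apply hn, simplexVertexMatrix, castSuccMatrix,
      ← Finset.mul_sum, sum_simplexVertex_apply hn, (Fin.castSucc_ne_last _).symm]
  | cast k =>
    simp [Matrix.mul_apply, simplexM_castSucc_apply, simplexVertexMatrix, castSuccMatrix,
      mul_assoc, ← Finset.mul_sum, sum_simplexVertex_mul_simplexVertex hn, (simplexMu_pos n).ne']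

lemma transpose_simplexM_mul_castSuccMatrix (n : ℕ) :
    (simplexM n)ᵀ * castSuccMatrix n = (simplexMu n)⁻¹ • simplexVertexMatrix n := by
  ext i t
  simp [Matrix.mul_apply, castSuccMatrix, simplexM_castSucc_apply, simplexVertexMatrix]

lemma simplexM_mulVec_one {n : ℕ} (hn : 1 ≤ n) :
    simplexM n *ᵥ 1 = Pi.single (Fin.last n) √(n + 1) := by
  ext l
  induction l using Fin.lastCases with
  | last =>
    simp [Matrix.mulVec, dotProduct, simplexM_last_apply hn, ← div_eq_mul_inv]
  | cast k =>
    simp [Matrix.mulVec, dotProduct, simplexM_castSucc_apply, ← Finset.mul_sum,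
      sum_simplexVertex_apply hn]

lemma blockDiag1_mul_castSuccMatrix (n : ℕ) (Q : Matrix (Fin n) (Fin n) ℝ) :
    blockDiag1 n Q * castSuccMatrix n = castSuccMatrix n * Q := by
  ext l t
  induction l using Fin.lastCases with
  | last =>
    simp [Matrix.mul_apply, blockDiag1, castSuccMatrix, t.isLt.ne',
      (Fin.castSucc_ne_last _).symm]
  | cast k => simp [Matrix.mul_apply, blockDiag1, castSuccMatrix]

lemma blockDiag1_mulVec_single_last (n : ℕ) (Q : Matrix (Fin n) (Fin n) ℝ) (x : ℝ) :
    blockDiag1 n Q *ᵥ Pi.single (Fin.last n) x = Pi.single (Fin.last n) x := by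
  ext l
  induction l using Fin.lastCases with
  | last => simp [Matrix.mulVec_single, blockDiag1]
  | cast k => simp [Matrix.mulVec_single, blockDiag1]

noncomputable def simplexConj (n : ℕ) (Q : Matrix (Fin n) (Fin n) ℝ) :
    Matrix (Fin (n + 1)) (Fin (n + 1)) ℝ :=
  (simplexM n)ᵀ * blockDiag1 n Q * simplexM n

lemma simplexConj_mul_simplexVertexMatrix {n : ℕ} (hn : 1 ≤ n)
    (Q : Matrix (Fin n) (Fin n) ℝ) :
    simplexConj n Q * simplexVertexMatrix n = simplexVertexMatrix n * Q := by
  rw [simplexConj, Matrix.mul_assoc, simplexM_mul_simplexVertexMatrix hn, Matrix.mul_smul,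
    Matrix.mul_assoc, blockDiag1_mul_castSuccMatrix, ← Matrix.mul_assoc,
    transpose_simplexM_mul_castSuccMatrix, Matrix.smul_mul, smul_smul,
    mul_inv_cancel₀ (simplexMu_pos n).ne', one_smul]

lemma simplexConj_mulVec_const {n : ℕ} (hn : 1 ≤ n) (Q : Matrix (Fin n) (Fin n) ℝ) (x : ℝ) :
    simplexConj n Q *ᵥ (fun _ => x) = fun _ => x := by
  have hconst : (fun _ : Fin (n + 1) => x) = x • 1 := by ext; simp
  rw [hconst, Matrix.mulVec_smul, simplexConj, ← Matrix.mulVec_mulVec, simplexM_mulVec_one hn,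
    ← Matrix.mulVec_mulVec, blockDiag1_mulVec_single_last, Matrix.mulVec_single]
  ext i
  simp [simplexM_last_apply hn, (Real.sqrt_pos.2 (n.cast_add_one_pos (α := ℝ))).ne']

lemma filterBank_submatrix_castAdd {n : ℕ} {c₀ : EuclideanSpace ℝ (Fin n)} {s₁ s₂ : ℝ}
    {RO : Matrix (Fin n) (Fin n) ℝ} {T : Fin (n + 1) → Matrix (Fin n) (Fin n) ℝ}
    (hTc : ∀ i, (T i).mulVec (RO.mulVec c₀) = ‖c₀‖ • simplexVertex n i) :
    (filterBank n c₀ s₁ s₂ RO T).submatrix id (Fin.castAdd 2) =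
      ‖c₀‖ • (simplexVertexMatrix n * RO) := by
  ext i k
  have hrow : (ROᵀ * T i * RO) *ᵥ c₀ = ‖c₀‖ • (ROᵀ *ᵥ simplexVertex n i) := by
    rw [Matrix.mul_assoc, ← Matrix.mulVec_mulVec, ← Matrix.mulVec_mulVec, hTc, Matrix.mulVec_smul]
  simp only [Matrix.submatrix_apply, id, filterBank, Matrix.of_apply, Fin.val_castAdd, k.isLt,
    dite_true, Fin.eta, hrow]
  simp [Matrix.mulVec, dotProduct, Matrix.mul_apply, simplexVertexMatrix, mul_comm]

lemma filterBank_apply_of_le {n : ℕ} {c₀ : EuclideanSpace ℝ (Fin n)} {s₁ s₂ : ℝ}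
    {RO : Matrix (Fin n) (Fin n) ℝ} {T : Fin (n + 1) → Matrix (Fin n) (Fin n) ℝ}
    {j : Fin (n + 2)} (hj : n ≤ j) (i : Fin (n + 1)) :
    filterBank n c₀ s₁ s₂ RO T i j = if (j : ℕ) = n then s₁ else s₂ := by
  simp [filterBank, hj.not_gt]

lemma mul_blockDiag2_apply_castAdd {ι : Type*} [Fintype ι] {n : ℕ}
    (B : Matrix ι (Fin (n + 2)) ℝ) (R : Matrix (Fin n) (Fin n) ℝ) (i : ι) (k : Fin n) :
    (B * blockDiag2 n R) i (Fin.castAdd 2 k) = (B.submatrix id (Fin.castAdd 2) * R) i k := by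
  have : n + 1 ≠ k := by omega
  simp [Matrix.mul_apply, Fin.sum_univ_add, blockDiag2, k.isLt.ne', this]

lemma mul_blockDiag2_apply_of_le {ι : Type*} [Fintype ι] {n : ℕ}
    (B : Matrix ι (Fin (n + 2)) ℝ) (R : Matrix (Fin n) (Fin n) ℝ) (i : ι) {j : Fin (n + 2)}
    (hj : n ≤ j) : (B * blockDiag2 n R) i j = B i j := by
  rw [Matrix.mul_apply, Finset.sum_eq_single j]
  · simp [blockDiag2, hj.not_gt]
  · intro m _ hm
    simp [blockDiag2, hj.not_gt, Fin.val_ne_of_ne hm]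
  · simp

lemma mul_eq_mul_blockDiag2 {ι : Type*} [Fintype ι] {n : ℕ} {V : Matrix ι ι ℝ}
    {B : Matrix ι (Fin (n + 2)) ℝ} {R : Matrix (Fin n) (Fin n) ℝ}
    (hleft : V * B.submatrix id (Fin.castAdd 2) = B.submatrix id (Fin.castAdd 2) * R)
    (hright : ∀ j : Fin (n + 2), n ≤ j → V *ᵥ (fun i => B i j) = fun i => B i j) :
    V * B = B * blockDiag2 n R := by
  ext i j
  rcases lt_or_ge (j : ℕ) n with hj | hj
  · obtain ⟨k, rfl⟩ : ∃ k : Fin n, Fin.castAdd 2 k = j := ⟨⟨j, hj⟩, rfl⟩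
    rw [mul_blockDiag2_apply_castAdd, ← hleft]
    rfl
  · rw [mul_blockDiag2_apply_of_le B R i hj]
    exact congrFun (hright j hj) i

theorem equivariant_hypersphere_general (n : ℕ) (hn : 1 ≤ n)
    (c₀ : EuclideanSpace ℝ (Fin n)) (s₁ s₂ : ℝ)
    (RO : Matrix (Fin n) (Fin n) ℝ) (hRO : ROᵀ * RO = 1)
    (T : Fin (n + 1) → Matrix (Fin n) (Fin n) ℝ)
    (hTc : ∀ i, (T i).mulVec (RO.mulVec c₀) = ‖c₀‖ • simplexVertex n i)
    (R : Matrix (Fin n) (Fin n) ℝ) :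
    ((simplexM n)ᵀ * blockDiag1 n (RO * R * ROᵀ) * simplexM n) *
        filterBank n c₀ s₁ s₂ RO T =
      filterBank n c₀ s₁ s₂ RO T * blockDiag2 n R ∧
    ∀ X : Fin (n + 2) → ℝ,
      ((simplexM n)ᵀ * blockDiag1 n (RO * R * ROᵀ) * simplexM n).mulVec
          ((filterBank n c₀ s₁ s₂ RO T).mulVec X) =
        (filterBank n c₀ s₁ s₂ RO T).mulVec ((blockDiag2 n R).mulVec X) := by
  have hVB : simplexConj n (RO * R * ROᵀ) * filterBank n c₀ s₁ s₂ RO T =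
      filterBank n c₀ s₁ s₂ RO T * blockDiag2 n R := by
    refine mul_eq_mul_blockDiag2 ?_ fun j hj => ?_
    · have hconj : RO * R * ROᵀ * RO = RO * R := by rw [Matrix.mul_assoc, hRO, Matrix.mul_one]
      rw [filterBank_submatrix_castAdd hTc, Matrix.mul_smul, Matrix.smul_mul, ← Matrix.mul_assoc,
        simplexConj_mul_simplexVertexMatrix hn, Matrix.mul_assoc, hconj, Matrix.mul_assoc]
    · simp only [filterBank_apply_of_le hj]
      exact simplexConj_mulVec_const hn _ _
  exact ⟨hVB, fun X => by rw [Matrix.mulVec_mulVec, Matrix.mulVec_mulVec, ← simplexConj, hVB]⟩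

/-- (Theorem: O(n)-equivariance of the equivariant hypersphere.) For every R ∈ O(n),
V · B = B · D₂(R) with V = M_nᵀ · D(R_O · R · R_Oᵀ) · M_n; consequently, for every
input X ∈ ℝ^{n+2}, V · (B · X) = B · (D₂(R) · X). -/
theorem equivariant_hypersphere (n : ℕ) (hn : 1 ≤ n)
    (c₀ : EuclideanSpace ℝ (Fin n)) (s₁ s₂ : ℝ)
    (RO : Matrix (Fin n) (Fin n) ℝ) (hRO : ROᵀ * RO = 1)
    (T : Fin (n + 1) → Matrix (Fin n) (Fin n) ℝ) (hT : ∀ i, (T i)ᵀ * T i = 1)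
    (hTc : ∀ i, (T i).mulVec (RO.mulVec c₀) = ‖c₀‖ • simplexVertex n i)
    (R : Matrix (Fin n) (Fin n) ℝ) (hR : Rᵀ * R = 1) :
    ((simplexM n)ᵀ * blockDiag1 n (RO * R * ROᵀ) * simplexM n) *
        filterBank n c₀ s₁ s₂ RO T =
      filterBank n c₀ s₁ s₂ RO T * blockDiag2 n R ∧
    ∀ X : Fin (n + 2) → ℝ,
      ((simplexM n)ᵀ * blockDiag1 n (RO * R * ROᵀ) * simplexM n).mulVec
          ((filterBank n c₀ s₁ s₂ RO T).mulVec X) =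
        (filterBank n c₀ s₁ s₂ RO T).mulVec ((blockDiag2 n R).mulVec X) :=
  equivariant_hypersphere_general n hn c₀ s₁ s₂ RO hRO T hTc R
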